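/- arXiv:2511.04496 — 7 statements merged into one kernel-verified Lean document; each statement's English description precedes it below -/
import Mathlib

section
/- Fix N ∈ ℕ and for i = 1,…,N let δ_i ∈ {0,1}, y_i ∈ ℝ, q_i > 0, π̂_i > 0 and b_i ∈ ℝ^p. Suppose β̂ ∈ ℝ^p satisfies the weighted normal equations Σ_{i=1}^N δ_i q_i (y_i − b_iᵀβ̂) b_i = 0, and suppose there exists c ∈ ℝ^p such that (q_i π̂_i)^{-1} = b_iᵀ c for every i with δ_i = 1. Then the internal bias calibration condition holds: Σ_{i=1}^N δ_i π̂_i^{-1} (y_i − b_iᵀβ̂) = 0. -/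
open Matrix Finset

/-- Internal bias calibration: if `β̂` solves the weighted normal equations and
`(q_i π̂_i)⁻¹` lies in the column space of `b_i` over respondents, then the
inverse-propensity weighted residual sum vanishes. -/
theorem stmt_0 (N p : ℕ) (δ q πhat y : Fin N → ℝ)
    (hδ : ∀ i, δ i = 0 ∨ δ i = 1) (hq : ∀ i, 0 < q i) (hπ : ∀ i, 0 < πhat i)
    (b : Fin N → Fin p → ℝ) (βhat : Fin p → ℝ)
    (hnorm : ∑ i, (δ i * q i * (y i - b i ⬝ᵥ βhat)) • b i = (0 : Fin p → ℝ))
    (c : Fin p → ℝ) (hc : ∀ i, δ i = 1 → (q i * πhat i)⁻¹ = b i ⬝ᵥ c) :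
    ∑ i, δ i * (πhat i)⁻¹ * (y i - b i ⬝ᵥ βhat) = 0 := by
  have h0 := congrArg (fun v => v ⬝ᵥ c) hnorm
  simp only [dotProduct, Finset.sum_apply, Pi.smul_apply, smul_eq_mul, Finset.sum_mul,
    Pi.zero_apply, zero_mul, Finset.sum_const_zero] at h0
  rw [Finset.sum_comm] at h0
  have h : ∑ i, (δ i * q i * (y i - b i ⬝ᵥ βhat)) * (b i ⬝ᵥ c) = 0 := by
    rw [← h0]
    exact Finset.sum_congr rfl fun i _ => by
      simp [dotProduct, Finset.mul_sum, mul_assoc]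
  rw [← h]
  apply Finset.sum_congr rfl
  intro i _
  rcases hδ i with h1 | h1
  · simp [h1]
  · have hb := hc i h1
    have hqi := (hq i).ne'
    have hπi := (hπ i).ne'
    rw [h1, ← hb]
    field_simp
end

section
/- Fix N ∈ ℕ and for i = 1,…,N let δ_i ∈ {0,1}, q_i > 0, y_i ∈ ℝ and z̃_i ∈ ℝ^m. Assume A = Σ_{i=1}^N δ_i q_i z̃_i z̃_iᵀ is invertible, and set t = Σ_{i=1}^N z̃_i, ω̃_i = q_i z̃_iᵀ A^{-1} t, and γ̂ = A^{-1} Σ_{i=1}^N δ_i q_i z̃_i y_i. Then Σ_{i=1}^N δ_i ω̃_i y_i = Σ_{i=1}^N z̃_iᵀ γ̂; that is, the calibration-weighted estimator N^{-1} Σ δ_i ω̃_i y_i coincides with the augmented regression prediction estimator N^{-1} Σ z̃_iᵀ γ̂. -/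
/-!
Both estimators are values of the bilinear form `(u, v) ↦ u ⬝ᵥ (A⁻¹ *ᵥ v)`: the calibration
estimator is its value at `(∑ δᵢ qᵢ yᵢ z̃ᵢ, t)`, the regression prediction its value at
`(t, ∑ δᵢ qᵢ yᵢ z̃ᵢ)`. As a sum of outer products `z̃ᵢ z̃ᵢᵀ`, `A` is symmetric, hence so is `A⁻¹`
and the form is symmetric.
-/

open Matrix Finset

namespace Matrix

variable {ι n α : Type*}

theorem isSymm_vecMulVec_self [CommMagma α] (v : n → α) : (vecMulVec v v).IsSymm :=
  transpose_vecMulVec v v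

theorem isSymm_sum [AddCommMonoid α] (s : Finset ι) (A : ι → Matrix n n α)
    (hA : ∀ i ∈ s, (A i).IsSymm) : (∑ i ∈ s, A i).IsSymm := by
  rw [IsSymm, transpose_sum]
  exact sum_congr rfl hA

theorem IsSymm.dotProduct_mulVec_comm [Fintype n] [CommSemiring α] {B : Matrix n n α}
    (hB : B.IsSymm) (u v : n → α) : u ⬝ᵥ (B *ᵥ v) = v ⬝ᵥ (B *ᵥ u) := by
  rw [dotProduct_mulVec, ← hB.eq, vecMul_transpose, dotProduct_comm, hB.eq]

end Matrix

theorem stmt_2_general (N m : ℕ) (δ q y : Fin N → ℝ)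
    (z : Fin N → Fin m → ℝ)
    (A : Matrix (Fin m) (Fin m) ℝ)
    (hA : A = ∑ i, (δ i * q i) • vecMulVec (z i) (z i))
    (t : Fin m → ℝ) (ht : t = ∑ i, z i)
    (ωt : Fin N → ℝ) (hωt : ∀ i, ωt i = q i * (z i ⬝ᵥ (A⁻¹ *ᵥ t)))
    (γ : Fin m → ℝ) (hγ : γ = A⁻¹ *ᵥ ∑ i, (δ i * q i * y i) • z i) :
    ∑ i, δ i * ωt i * y i = ∑ i, z i ⬝ᵥ γ := by
  have hAinv_symm : A⁻¹.IsSymm := by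
    refine IsSymm.inv (hA ▸ isSymm_sum _ _ fun i _ => ?_)
    exact (isSymm_vecMulVec_self (z i)).smul _
  calc ∑ i, δ i * ωt i * y i
      = (∑ i, (δ i * q i * y i) • z i) ⬝ᵥ (A⁻¹ *ᵥ t) := by
        rw [sum_dotProduct]
        refine sum_congr rfl fun i _ => ?_
        rw [hωt, smul_dotProduct, smul_eq_mul]
        ring
    _ = t ⬝ᵥ (A⁻¹ *ᵥ ∑ i, (δ i * q i * y i) • z i) := hAinv_symm.dotProduct_mulVec_comm _ _
    _ = ∑ i, z i ⬝ᵥ γ := by rw [hγ, ht, sum_dotProduct]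

/-- The calibration-weighted estimator with the minimum-weighted-squared-norm
weights coincides with the augmented regression prediction estimator. -/
theorem stmt_2 (N m : ℕ) (δ q y : Fin N → ℝ)
    (hδ : ∀ i, δ i = 0 ∨ δ i = 1) (hq : ∀ i, 0 < q i)
    (z : Fin N → Fin m → ℝ)
    (A : Matrix (Fin m) (Fin m) ℝ)
    (hA : A = ∑ i, (δ i * q i) • vecMulVec (z i) (z i))
    (hAinv : IsUnit A)
    (t : Fin m → ℝ) (ht : t = ∑ i, z i)
    (ωt : Fin N → ℝ) (hωt : ∀ i, ωt i = q i * (z i ⬝ᵥ (A⁻¹ *ᵥ t)))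
    (γ : Fin m → ℝ) (hγ : γ = A⁻¹ *ᵥ ∑ i, (δ i * q i * y i) • z i) :
    ∑ i, δ i * ωt i * y i = ∑ i, z i ⬝ᵥ γ :=
  stmt_2_general N m δ q y z A hA t ht ωt hωt γ hγ
end

section
/- Let V ⊆ ℝ be an open interval, G : V → ℝ strictly convex and differentiable with derivative g = G′, and f the inverse of g defined on the range of g. Fix N ∈ ℕ and for i = 1,…,N let δ_i ∈ {0,1}, q_i > 0 and z_i ∈ ℝ^d. Suppose λ̂ ∈ ℝ^d is such that q_i λ̂ᵀ z_i lies in the range of g for every i with δ_i = 1 and λ̂ solves the calibration equation Σ_{i=1}^N δ_i f(q_i λ̂ᵀ z_i) z_i = Σ_{i=1}^N z_i; set ω̂_i = f(q_i λ̂ᵀ z_i). Then for every ω ∈ ℝ^N with ω_i ∈ V for all i with δ_i = 1 and Σ_{i=1}^N δ_i ω_i z_i = Σ_{i=1}^N z_i, it holds that Σ_{i=1}^N δ_i G(ω_i) q_i^{-1} ≥ Σ_{i=1}^N δ_i G(ω̂_i) q_i^{-1}, with equality if and only if ω_i = ω̂_i for every i with δ_i = 1. Hence the dual stationary point yields the unique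 solution of the primal generalized entropy calibration problem. -/
open Matrix Finset

/-!
Stationarity of the dual, `g (ω̂ i) = q i * λᵀ z i` on respondents, turns the linear part of
`Σ δ i * (q i)⁻¹ * (G (ω i) - G (ω̂ i))` into `λᵀ (Σ δ i * (ω i - ω̂ i) • z i)`, which vanishes
because `ω` and `ω̂` are both calibrated. So the objective at `ω` exceeds the one at `ω̂` by a
weighted sum of Bregman divergences `G (ω i) - G (ω̂ i) - g (ω̂ i) * (ω i - ω̂ i)`, and strict
convexity makes each of these nonnegative, with equality only at `ω i = ω̂ i`.
-/

def bregmanDiv (G g : ℝ → ℝ) (b a : ℝ) : ℝ :=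
  G b - G a - g a * (b - a)

namespace StrictConvexOn

variable {V : Set ℝ} {G g : ℝ → ℝ}

theorem bregmanDiv_pos (hconv : StrictConvexOn ℝ V G) (hderiv : ∀ x ∈ V, HasDerivAt G (g x) x)
    {a b : ℝ} (ha : a ∈ V) (hb : b ∈ V) (hne : b ≠ a) : 0 < bregmanDiv G g b a := by
  unfold bregmanDiv
  rcases hne.lt_or_gt with hba | hab
  · have hslope := hconv.slope_lt_of_hasDerivAt hb ha hba (hderiv a ha)
    rw [slope_def_field, div_lt_iff₀ (sub_pos.2 hba)] at hslope
    linarith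
  · have hslope := hconv.lt_slope_of_hasDerivAt ha hb hab (hderiv a ha)
    rw [slope_def_field, lt_div_iff₀ (sub_pos.2 hab)] at hslope
    linarith

theorem bregmanDiv_nonneg (hconv : StrictConvexOn ℝ V G)
    (hderiv : ∀ x ∈ V, HasDerivAt G (g x) x) {a b : ℝ} (ha : a ∈ V) (hb : b ∈ V) :
    0 ≤ bregmanDiv G g b a := by
  rcases eq_or_ne b a with rfl | hne
  · simp [bregmanDiv]
  · exact (hconv.bregmanDiv_pos hderiv ha hb hne).le

theorem bregmanDiv_eq_zero_iff (hconv : StrictConvexOn ℝ V G)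
    (hderiv : ∀ x ∈ V, HasDerivAt G (g x) x) {a b : ℝ} (ha : a ∈ V) (hb : b ∈ V) :
    bregmanDiv G g b a = 0 ↔ b = a := by
  refine ⟨fun h => by_contra fun hne => (hconv.bregmanDiv_pos hderiv ha hb hne).ne' h, ?_⟩
  rintro rfl
  simp [bregmanDiv]

end StrictConvexOn

theorem sum_mul_dotProduct {ι n : Type*} [Fintype ι] [Fintype n] (c : ι → ℝ) (z : ι → n → ℝ)
    (lam : n → ℝ) : ∑ i, c i * (lam ⬝ᵥ z i) = lam ⬝ᵥ ∑ i, c i • z i := by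
  simp only [dotProduct_sum, dotProduct_smul, smul_eq_mul]

theorem sum_mul_inv_eq_add_sum_bregmanDiv {ι n : Type*} [Fintype ι] [Fintype n] (G g : ℝ → ℝ)
    (δ q ω ωhat : ι → ℝ) (z : ι → n → ℝ) (lam : n → ℝ) (hq : ∀ i, q i ≠ 0)
    (hstat : ∀ i, δ i * g (ωhat i) = δ i * (q i * (lam ⬝ᵥ z i)))
    (hcal : ∑ i, (δ i * ω i) • z i = ∑ i, (δ i * ωhat i) • z i) :
    ∑ i, δ i * G (ω i) * (q i)⁻¹ =
      ∑ i, δ i * G (ωhat i) * (q i)⁻¹ + ∑ i, δ i * (q i)⁻¹ * bregmanDiv G g (ω i) (ωhat i) := by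
  have hlinear : ∑ i, δ i * (q i)⁻¹ * g (ωhat i) * (ω i - ωhat i) = 0 := by
    have hterm : ∀ i, δ i * (q i)⁻¹ * g (ωhat i) * (ω i - ωhat i) =
        δ i * ω i * (lam ⬝ᵥ z i) - δ i * ωhat i * (lam ⬝ᵥ z i) := by
      intro i
      calc δ i * (q i)⁻¹ * g (ωhat i) * (ω i - ωhat i)
          = (q i)⁻¹ * (δ i * g (ωhat i)) * (ω i - ωhat i) := by ring
        _ = _ := by rw [hstat i]; field_simp [hq i]
    simp only [hterm, sum_sub_distrib, sum_mul_dotProduct, hcal, sub_self]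
  rw [← sub_eq_zero, ← hlinear, ← sub_eq_zero]
  simp only [bregmanDiv, ← sum_sub_distrib, ← sum_add_distrib]
  exact sum_eq_zero fun i _ => by ring

theorem stmt_6_general (N d : ℕ) (V : Set ℝ)
    (G g f : ℝ → ℝ) (hconv : StrictConvexOn ℝ V G)
    (hderiv : ∀ ω ∈ V, HasDerivAt G (g ω) ω)
    (hfinv : ∀ ω ∈ V, f (g ω) = ω)
    (δ q : Fin N → ℝ) (hδ : ∀ i, δ i = 0 ∨ δ i = 1) (hq : ∀ i, 0 < q i)
    (z : Fin N → Fin d → ℝ) (lam : Fin d → ℝ)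
    (hrange : ∀ i, δ i = 1 → ∃ ω ∈ V, g ω = q i * (lam ⬝ᵥ z i))
    (ωhat : Fin N → ℝ) (hωhat : ∀ i, ωhat i = f (q i * (lam ⬝ᵥ z i)))
    (hcal : ∑ i, (δ i * ωhat i) • z i = ∑ i, z i) :
    ∀ ω : Fin N → ℝ, (∀ i, δ i = 1 → ω i ∈ V) →
      (∑ i, (δ i * ω i) • z i = ∑ i, z i) →
      (∑ i, δ i * G (ω i) * (q i)⁻¹ ≥ ∑ i, δ i * G (ωhat i) * (q i)⁻¹ ∧
       (∑ i, δ i * G (ω i) * (q i)⁻¹ = ∑ i, δ i * G (ωhat i) * (q i)⁻¹ ↔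
        ∀ i, δ i = 1 → ω i = ωhat i)) := by
  intro ω hωV hcalω
  have hhat : ∀ i, δ i = 1 → ωhat i ∈ V ∧ g (ωhat i) = q i * (lam ⬝ᵥ z i) := by
    intro i hi
    obtain ⟨w, hwV, hgw⟩ := hrange i hi
    obtain rfl : ωhat i = w := by rw [hωhat i, ← hgw, hfinv w hwV]
    exact ⟨hwV, hgw⟩
  have hstat : ∀ i, δ i * g (ωhat i) = δ i * (q i * (lam ⬝ᵥ z i)) := fun i => by
    rcases hδ i with h | h
    · simp [h]
    · rw [(hhat i h).2]
  set gap := fun i => δ i * (q i)⁻¹ * bregmanDiv G g (ω i) (ωhat i)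
  have hdecomp := sum_mul_inv_eq_add_sum_bregmanDiv G g δ q ω ωhat z lam (fun i => (hq i).ne')
    hstat (hcalω.trans hcal.symm)
  have hgap : ∀ i, 0 ≤ gap i ∧ (gap i = 0 ↔ (δ i = 1 → ω i = ωhat i)) := fun i => by
    rcases hδ i with h | h
    · simp [gap, h]
    · have hqi := inv_pos.2 (hq i)
      have hD := hconv.bregmanDiv_nonneg hderiv (hhat i h).1 (hωV i h)
      refine ⟨by simpa [gap, h] using mul_nonneg hqi.le hD, ?_⟩
      simp [gap, h, hqi.ne', hconv.bregmanDiv_eq_zero_iff hderiv (hhat i h).1 (hωV i h)]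
  rw [hdecomp, ge_iff_le, le_add_iff_nonneg_right, add_eq_left,
    sum_eq_zero_iff_of_nonneg fun i _ => (hgap i).1]
  exact ⟨sum_nonneg fun i _ => (hgap i).1, by simp only [mem_univ, true_imp_iff, (hgap _).2]⟩

/-- A dual stationary point yields the unique solution of the primal
generalized entropy calibration problem: the weights
`ω̂_i = f(q_i λ̂ᵀz_i)` (with `f = g⁻¹`) satisfying the calibration equation
minimize `Σ δ_i G(ω_i) q_i⁻¹` among calibrated weights with entries in `V`,
uniquely on respondents. -/
theorem stmt_6 (N d : ℕ) (V : Set ℝ) (hVopen : IsOpen V) (hVconn : V.OrdConnected)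
    (G g f : ℝ → ℝ) (hconv : StrictConvexOn ℝ V G)
    (hderiv : ∀ ω ∈ V, HasDerivAt G (g ω) ω)
    (hfinv : ∀ ω ∈ V, f (g ω) = ω)
    (δ q : Fin N → ℝ) (hδ : ∀ i, δ i = 0 ∨ δ i = 1) (hq : ∀ i, 0 < q i)
    (z : Fin N → Fin d → ℝ) (lam : Fin d → ℝ)
    (hrange : ∀ i, δ i = 1 → ∃ ω ∈ V, g ω = q i * (lam ⬝ᵥ z i))
    (ωhat : Fin N → ℝ) (hωhat : ∀ i, ωhat i = f (q i * (lam ⬝ᵥ z i)))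
    (hcal : ∑ i, (δ i * ωhat i) • z i = ∑ i, z i) :
    ∀ ω : Fin N → ℝ, (∀ i, δ i = 1 → ω i ∈ V) →
      (∑ i, (δ i * ω i) • z i = ∑ i, z i) →
      (∑ i, δ i * G (ω i) * (q i)⁻¹ ≥ ∑ i, δ i * G (ωhat i) * (q i)⁻¹ ∧
       (∑ i, δ i * G (ω i) * (q i)⁻¹ = ∑ i, δ i * G (ωhat i) * (q i)⁻¹ ↔
        ∀ i, δ i = 1 → ω i = ωhat i)) :=
  stmt_6_general N d V G g f hconv hderiv hfinv δ q hδ hq z lam hrange ωhat hωhat hcal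
end

section
/- (Generalized Pythagorean identity.) Let V ⊆ ℝ be an open interval, G : V → ℝ strictly convex and differentiable with derivative g = G′, and f the inverse of g. Fix N ∈ ℕ and for i = 1,…,N let δ_i ∈ {0,1}, q_i > 0, z_i ∈ ℝ^d, and initial weights ω_i^{(0)} ∈ V. Define the weighted total Bregman divergence D̃_G(ω‖ω′) = Σ_{i=1}^N δ_i q_i^{-1} D_G(ω_i‖ω′_i) and the constraint set C = {ω : Σ_{i=1}^N δ_i ω_i z_i = Σ_{i=1}^N z_i}. Suppose ω̂ ∈ C has the dual form ω̂_i = f(g(ω_i^{(0)}) + q_i λ̂ᵀ z_i) for some λ̂ ∈ ℝ^d (for all i with δ_i = 1). Then for every ω ∈ C with entries in V on {i : δ_i = 1}: D̃_G(ω‖ω^{(0)}) = D̃_G(ω‖ω̂) + D̃_G(ω̂‖ω^{(0)}). -/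
/-! The Bregman three-point identity `D(a‖c) = D(a‖b) + D(b‖c) + (g b - g c)(a - b)` reduces the
claim to `∑ δᵢ qᵢ⁻¹ (g ω̂ᵢ - g ω⁰ᵢ)(ωᵢ - ω̂ᵢ) = 0`. By the dual form this sum is
`λ̂ ⬝ᵥ ∑ δᵢ (ωᵢ - ω̂ᵢ) zᵢ`, which vanishes because `ω` and `ω̂` both satisfy the calibration
constraint. -/

open Matrix Finset

def bregman (G g : ℝ → ℝ) (a b : ℝ) : ℝ := G a - G b - g b * (a - b)

theorem bregman_three_point (G g : ℝ → ℝ) (a b c : ℝ) :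
    bregman G g a c = bregman G g a b + bregman G g b c + (g b - g c) * (a - b) := by
  unfold bregman
  ring

theorem sum_sub_mul_dotProduct_eq_zero {ι n : Type*} [Fintype ι] [Fintype n]
    (a b : ι → ℝ) (z : ι → n → ℝ) (lam : n → ℝ)
    (h : ∑ i, a i • z i = ∑ i, b i • z i) :
    ∑ i, (a i - b i) * (lam ⬝ᵥ z i) = 0 := by
  have hlam := congrArg (lam ⬝ᵥ ·) h
  simp only [dotProduct_sum, dotProduct_smul, smul_eq_mul] at hlam
  simp only [sub_mul, sum_sub_distrib, hlam, sub_self]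

theorem stmt_8_general (N d : ℕ) (V : Set ℝ)
    (G g f : ℝ → ℝ)
    (hfinv : ∀ ω ∈ V, f (g ω) = ω)
    (δ q ω0 : Fin N → ℝ) (hδ : ∀ i, δ i = 0 ∨ δ i = 1) (hq : ∀ i, 0 < q i)
    (z : Fin N → Fin d → ℝ)
    (D : ℝ → ℝ → ℝ) (hD : ∀ a b, D a b = G a - G b - g b * (a - b))
    (Dt : (Fin N → ℝ) → (Fin N → ℝ) → ℝ)
    (hDt : ∀ ω ω' : Fin N → ℝ, Dt ω ω' = ∑ i, δ i * (q i)⁻¹ * D (ω i) (ω' i))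
    (lam : Fin d → ℝ)
    (hrange : ∀ i, δ i = 1 → ∃ ω ∈ V, g ω = g (ω0 i) + q i * (lam ⬝ᵥ z i))
    (ωhat : Fin N → ℝ)
    (hdual : ∀ i, δ i = 1 → ωhat i = f (g (ω0 i) + q i * (lam ⬝ᵥ z i)))
    (hcal : ∑ i, (δ i * ωhat i) • z i = ∑ i, z i) :
    ∀ ω : Fin N → ℝ, (∀ i, δ i = 1 → ω i ∈ V) →
      (∑ i, (δ i * ω i) • z i = ∑ i, z i) →
      Dt ω ω0 = Dt ω ωhat + Dt ωhat ω0 := by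
  intro ω _ hωcal
  have hDbregman : D = bregman G g := funext₂ hD
  have hgap : ∀ i, δ i = 1 → g (ωhat i) - g (ω0 i) = q i * (lam ⬝ᵥ z i) := by
    intro i hi
    obtain ⟨w, hwV, hgw⟩ := hrange i hi
    rw [hdual i hi, ← hgw, hfinv w hwV, hgw, add_sub_cancel_left]
  have hterm : ∀ i, δ i * (q i)⁻¹ * D (ω i) (ω0 i) =
      δ i * (q i)⁻¹ * D (ω i) (ωhat i) + δ i * (q i)⁻¹ * D (ωhat i) (ω0 i)
        + (δ i * ω i - δ i * ωhat i) * (lam ⬝ᵥ z i) := by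
    intro i
    rcases hδ i with h0 | h1
    · simp [h0]
    · rw [h1, hDbregman, bregman_three_point G g _ (ωhat i), hgap i h1]
      field_simp [(hq i).ne']
  have horth := sum_sub_mul_dotProduct_eq_zero _ _ z lam (hωcal.trans hcal.symm)
  rw [hDt, hDt, hDt, sum_congr rfl fun i _ => hterm i, sum_add_distrib, sum_add_distrib, horth,
    add_zero]

/-- Generalized Pythagorean identity: if `ω̂ ∈ C` has the dual form
`ω̂_i = f(g(ω⁰_i) + q_i λ̂ᵀz_i)` (with `f = g⁻¹`), then for every calibrated
`ω ∈ C`, the weighted total Bregman divergences satisfy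
`D̃(ω‖ω⁰) = D̃(ω‖ω̂) + D̃(ω̂‖ω⁰)`. -/
theorem stmt_8 (N d : ℕ) (V : Set ℝ) (hVopen : IsOpen V) (hVconn : V.OrdConnected)
    (G g f : ℝ → ℝ) (hconv : StrictConvexOn ℝ V G)
    (hderiv : ∀ ω ∈ V, HasDerivAt G (g ω) ω)
    (hfinv : ∀ ω ∈ V, f (g ω) = ω)
    (δ q ω0 : Fin N → ℝ) (hδ : ∀ i, δ i = 0 ∨ δ i = 1) (hq : ∀ i, 0 < q i)
    (hω0 : ∀ i, ω0 i ∈ V)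
    (z : Fin N → Fin d → ℝ)
    (D : ℝ → ℝ → ℝ) (hD : ∀ a b, D a b = G a - G b - g b * (a - b))
    (Dt : (Fin N → ℝ) → (Fin N → ℝ) → ℝ)
    (hDt : ∀ ω ω' : Fin N → ℝ, Dt ω ω' = ∑ i, δ i * (q i)⁻¹ * D (ω i) (ω' i))
    (lam : Fin d → ℝ)
    (hrange : ∀ i, δ i = 1 → ∃ ω ∈ V, g ω = g (ω0 i) + q i * (lam ⬝ᵥ z i))
    (ωhat : Fin N → ℝ)
    (hdual : ∀ i, δ i = 1 → ωhat i = f (g (ω0 i) + q i * (lam ⬝ᵥ z i)))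
    (hcal : ∑ i, (δ i * ωhat i) • z i = ∑ i, z i) :
    ∀ ω : Fin N → ℝ, (∀ i, δ i = 1 → ω i ∈ V) →
      (∑ i, (δ i * ω i) • z i = ∑ i, z i) →
      Dt ω ω0 = Dt ω ωhat + Dt ωhat ω0 :=
  stmt_8_general N d V G g f hfinv δ q ω0 hδ hq z D hD Dt hDt lam hrange ωhat hdual hcal
end

section
/- (Bregman projection.) Let V ⊆ ℝ be an open interval, G : V → ℝ strictly convex and differentiable with derivative g = G′, and f the inverse of g. Fix N ∈ ℕ and for i = 1,…,N let δ_i ∈ {0,1}, q_i > 0, z_i ∈ ℝ^d, and initial weights ω_i^{(0)} ∈ V. Let C = {ω : Σ_{i=1}^N δ_i ω_i z_i = Σ_{i=1}^N z_i}, and suppose ω̂ ∈ C has the dual form ω̂_i = f(g(ω_i^{(0)}) + q_i λ̂ᵀ z_i) for some λ̂ ∈ ℝ^d. Then D̃_G(ω‖ω^{(0)}) ≥ D̃_G(ω̂‖ω^{(0)}) for every ω ∈ C with entries in V on {i : δ_i = 1}, with equality if and only if ω_i = ω̂_i for every i with δ_i = 1; hence ω̂ is the unique minimizer of the weighted total Bregman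 divergence from ω^{(0)} over C. -/
/-!
Write `D(a‖b) = G a - G b - g b (a - b)`. For any `ω, ω̂, ω⁰` the three-point identity
`D(ω‖ω⁰) - D(ω̂‖ω⁰) = D(ω‖ω̂) + (g ω̂ - g ω⁰)(ω - ω̂)` holds. In the dual form
`g ω̂ᵢ - g ω⁰ᵢ = qᵢ λᵀzᵢ`, so after weighting by `δᵢ / qᵢ` and summing, the linear terms add up to
`λᵀ Σ δᵢ (ωᵢ - ω̂ᵢ) zᵢ`, which vanishes because both `ω` and `ω̂` lie in `C`. This is the
Pythagorean identity `D̃(ω‖ω⁰) = D̃(ω̂‖ω⁰) + D̃(ω‖ω̂)`, and by strict convexity `D(ω‖ω̂) ≥ 0` with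
equality only at `ω = ω̂`.
-/

open Matrix Finset

theorem bregman_self (G g : ℝ → ℝ) (a : ℝ) : bregman G g a a = 0 := by
  simp [bregman]

theorem bregman_sub_bregman (G g : ℝ → ℝ) (a b c : ℝ) :
    bregman G g a c - bregman G g b c = bregman G g a b + (g b - g c) * (a - b) := by
  simp only [bregman]
  ring

section StrictConvex

variable {V : Set ℝ} {G g : ℝ → ℝ} {a b : ℝ}

theorem StrictConvexOn.bregman_pos (hG : StrictConvexOn ℝ V G) (hb' : HasDerivAt G (g b) b)
    (ha : a ∈ V) (hb : b ∈ V) (hab : a ≠ b) : 0 < bregman G g a b := by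
  unfold bregman
  rcases hab.lt_or_gt with h | h
  · have := hG.slope_lt_of_hasDerivAt ha hb h hb'
    rw [slope_def_field, div_lt_iff₀ (by linarith)] at this
    linarith
  · have := hG.lt_slope_of_hasDerivAt hb ha h hb'
    rw [slope_def_field, lt_div_iff₀ (by linarith)] at this
    linarith

theorem StrictConvexOn.bregman_nonneg (hG : StrictConvexOn ℝ V G) (hb' : HasDerivAt G (g b) b)
    (ha : a ∈ V) (hb : b ∈ V) : 0 ≤ bregman G g a b := by
  rcases eq_or_ne a b with rfl | hab
  · exact (bregman_self G g a).ge
  · exact (hG.bregman_pos hb' ha hb hab).le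

theorem StrictConvexOn.bregman_eq_zero_iff (hG : StrictConvexOn ℝ V G)
    (hb' : HasDerivAt G (g b) b) (ha : a ∈ V) (hb : b ∈ V) : bregman G g a b = 0 ↔ a = b := by
  refine ⟨fun h => ?_, fun h => h ▸ bregman_self G g a⟩
  by_contra hab
  exact (hG.bregman_pos hb' ha hb hab).ne' h

theorem StrictConvexOn.mul_bregman_nonneg (hG : StrictConvexOn ℝ V G)
    (hderiv : ∀ x ∈ V, HasDerivAt G (g x) x) {w : ℝ} (hw : 0 ≤ w) (ha : 0 < w → a ∈ V)
    (hb : 0 < w → b ∈ V) : 0 ≤ w * bregman G g a b := by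
  rcases hw.eq_or_lt with rfl | hw
  · simp
  · exact mul_nonneg hw.le (hG.bregman_nonneg (hderiv b (hb hw)) (ha hw) (hb hw))

variable {ι : Type*} {s : Finset ι} {w x y : ι → ℝ}

theorem StrictConvexOn.sum_bregman_nonneg (hG : StrictConvexOn ℝ V G)
    (hderiv : ∀ x ∈ V, HasDerivAt G (g x) x) (hw : ∀ i ∈ s, 0 ≤ w i)
    (hx : ∀ i ∈ s, 0 < w i → x i ∈ V) (hy : ∀ i ∈ s, 0 < w i → y i ∈ V) :
    0 ≤ ∑ i ∈ s, w i * bregman G g (x i) (y i) :=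
  sum_nonneg fun i hi => hG.mul_bregman_nonneg hderiv (hw i hi) (hx i hi) (hy i hi)

theorem StrictConvexOn.sum_bregman_eq_zero_iff (hG : StrictConvexOn ℝ V G)
    (hderiv : ∀ x ∈ V, HasDerivAt G (g x) x) (hw : ∀ i ∈ s, 0 ≤ w i)
    (hx : ∀ i ∈ s, 0 < w i → x i ∈ V) (hy : ∀ i ∈ s, 0 < w i → y i ∈ V) :
    ∑ i ∈ s, w i * bregman G g (x i) (y i) = 0 ↔ ∀ i ∈ s, 0 < w i → x i = y i := by
  rw [sum_eq_zero_iff_of_nonneg fun i hi =>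
    hG.mul_bregman_nonneg hderiv (hw i hi) (hx i hi) (hy i hi)]
  refine forall₂_congr fun i hi => ?_
  rcases (hw i hi).eq_or_lt with hwi | hwi
  · simp [← hwi]
  · simp [hwi, hwi.ne', hG.bregman_eq_zero_iff (hderiv _ (hy i hi hwi)) (hx i hi hwi) (hy i hi hwi)]

end StrictConvex

theorem sum_mul_dotProduct_eq_zero {ι : Type*} {d : ℕ} (s : Finset ι) (c : ι → ℝ)
    (z : ι → Fin d → ℝ) (lam : Fin d → ℝ) (hc : ∑ i ∈ s, c i • z i = 0) :
    ∑ i ∈ s, c i * (lam ⬝ᵥ z i) = 0 := by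
  simpa [dotProduct_sum, dotProduct_smul] using congrArg (lam ⬝ᵥ ·) hc

theorem sum_bregman_three_point {ι : Type*} (G g : ℝ → ℝ) (s : Finset ι) (w x y c : ι → ℝ) :
    ∑ i ∈ s, w i * bregman G g (x i) (c i) = ∑ i ∈ s, w i * bregman G g (y i) (c i) +
      ∑ i ∈ s, w i * bregman G g (x i) (y i) +
        ∑ i ∈ s, w i * ((g (y i) - g (c i)) * (x i - y i)) := by
  rw [← sum_add_distrib, ← sum_add_distrib]
  refine sum_congr rfl fun i _ => ?_
  rw [← mul_add, ← mul_add, add_assoc, ← bregman_sub_bregman]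
  ring

theorem stmt_9_general (N d : ℕ) (V : Set ℝ)
    (G g f : ℝ → ℝ) (hconv : StrictConvexOn ℝ V G)
    (hderiv : ∀ ω ∈ V, HasDerivAt G (g ω) ω)
    (hfinv : ∀ ω ∈ V, f (g ω) = ω)
    (δ q ω0 : Fin N → ℝ) (hδ : ∀ i, δ i = 0 ∨ δ i = 1) (hq : ∀ i, 0 < q i)
    (z : Fin N → Fin d → ℝ)
    (D : ℝ → ℝ → ℝ) (hD : ∀ a b, D a b = G a - G b - g b * (a - b))
    (Dt : (Fin N → ℝ) → (Fin N → ℝ) → ℝ)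
    (hDt : ∀ ω ω' : Fin N → ℝ, Dt ω ω' = ∑ i, δ i * (q i)⁻¹ * D (ω i) (ω' i))
    (lam : Fin d → ℝ)
    (hrange : ∀ i, δ i = 1 → ∃ ω ∈ V, g ω = g (ω0 i) + q i * (lam ⬝ᵥ z i))
    (ωhat : Fin N → ℝ)
    (hdual : ∀ i, δ i = 1 → ωhat i = f (g (ω0 i) + q i * (lam ⬝ᵥ z i)))
    (hcal : ∑ i, (δ i * ωhat i) • z i = ∑ i, z i) :
    ∀ ω : Fin N → ℝ, (∀ i, δ i = 1 → ω i ∈ V) →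
      (∑ i, (δ i * ω i) • z i = ∑ i, z i) →
      (Dt ω ω0 ≥ Dt ωhat ω0 ∧
       (Dt ω ω0 = Dt ωhat ω0 ↔ ∀ i, δ i = 1 → ω i = ωhat i)) := by
  intro ω hωV hωcal
  obtain rfl : D = bregman G g := funext₂ hD
  have hpos : ∀ i, 0 < δ i * (q i)⁻¹ ↔ δ i = 1 := fun i => by
    rcases hδ i with hi | hi <;> simp [hi, hq i]
  have hhat : ∀ i, δ i = 1 → ωhat i ∈ V ∧ g (ωhat i) = g (ω0 i) + q i * (lam ⬝ᵥ z i) := by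
    intro i hi
    obtain ⟨w, hwV, hgw⟩ := hrange i hi
    rw [hdual i hi, ← hgw, hfinv w hwV]
    exact ⟨hwV, rfl⟩
  have hlin : ∀ i ∈ univ, δ i * (q i)⁻¹ * ((g (ωhat i) - g (ω0 i)) * (ω i - ωhat i)) =
      δ i * (ω i - ωhat i) * (lam ⬝ᵥ z i) := fun i _ => by
    rcases hδ i with hi | hi
    · simp [hi]
    · rw [hi, (hhat i hi).2]
      field_simp [(hq i).ne']
      ring
  have hortho : ∑ i, δ i * (ω i - ωhat i) * (lam ⬝ᵥ z i) = 0 :=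
    sum_mul_dotProduct_eq_zero _ _ z lam <| by
      simp only [mul_sub, sub_smul, sum_sub_distrib, hωcal, hcal, sub_self]
  have hw : ∀ i ∈ univ, 0 ≤ δ i * (q i)⁻¹ := fun i _ => by
    rcases hδ i with hi | hi <;> simp [hi, (hq i).le]
  have hωV' : ∀ i ∈ univ, 0 < δ i * (q i)⁻¹ → ω i ∈ V := fun i _ h => hωV i ((hpos i).1 h)
  have hhatV : ∀ i ∈ univ, 0 < δ i * (q i)⁻¹ → ωhat i ∈ V := fun i _ h =>
    (hhat i ((hpos i).1 h)).1
  rw [hDt, hDt, sum_bregman_three_point G g _ _ _ ωhat, sum_congr rfl hlin, hortho, add_zero,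
    ge_iff_le, le_add_iff_nonneg_right, add_eq_left,
    hconv.sum_bregman_eq_zero_iff hderiv hw hωV' hhatV]
  exact ⟨hconv.sum_bregman_nonneg hderiv hw hωV' hhatV, by simp [hpos]⟩

/-- Bregman projection: the dual-form calibrated weights `ω̂` uniquely minimize
the weighted total Bregman divergence from the initial weights `ω⁰` over the
calibration constraint set `C`. -/
theorem stmt_9 (N d : ℕ) (V : Set ℝ) (hVopen : IsOpen V) (hVconn : V.OrdConnected)
    (G g f : ℝ → ℝ) (hconv : StrictConvexOn ℝ V G)
    (hderiv : ∀ ω ∈ V, HasDerivAt G (g ω) ω)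
    (hfinv : ∀ ω ∈ V, f (g ω) = ω)
    (δ q ω0 : Fin N → ℝ) (hδ : ∀ i, δ i = 0 ∨ δ i = 1) (hq : ∀ i, 0 < q i)
    (hω0 : ∀ i, ω0 i ∈ V)
    (z : Fin N → Fin d → ℝ)
    (D : ℝ → ℝ → ℝ) (hD : ∀ a b, D a b = G a - G b - g b * (a - b))
    (Dt : (Fin N → ℝ) → (Fin N → ℝ) → ℝ)
    (hDt : ∀ ω ω' : Fin N → ℝ, Dt ω ω' = ∑ i, δ i * (q i)⁻¹ * D (ω i) (ω' i))
    (lam : Fin d → ℝ)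
    (hrange : ∀ i, δ i = 1 → ∃ ω ∈ V, g ω = g (ω0 i) + q i * (lam ⬝ᵥ z i))
    (ωhat : Fin N → ℝ)
    (hdual : ∀ i, δ i = 1 → ωhat i = f (g (ω0 i) + q i * (lam ⬝ᵥ z i)))
    (hcal : ∑ i, (δ i * ωhat i) • z i = ∑ i, z i) :
    ∀ ω : Fin N → ℝ, (∀ i, δ i = 1 → ω i ∈ V) →
      (∑ i, (δ i * ω i) • z i = ∑ i, z i) →
      (Dt ω ω0 ≥ Dt ωhat ω0 ∧
       (Dt ω ω0 = Dt ωhat ω0 ↔ ∀ i, δ i = 1 → ω i = ωhat i)) :=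
  stmt_9_general N d V G g f hconv hderiv hfinv δ q ω0 hδ hq z D hD Dt hDt lam hrange ωhat hdual
    hcal
end

section
/- (Neyman orthogonality of the GEC estimator with respect to the dual multiplier.) Let I ⊆ ℝ be an open interval and f : I → ℝ differentiable, and let g be differentiable on f(I) with g(f(ν)) = ν for all ν ∈ I (so f′(ν) g′(f(ν)) = 1 with g′(f(ν)) ≠ 0). Fix N ∈ ℕ and for i = 1,…,N let δ_i ∈ {0,1}, q_i > 0, y_i ∈ ℝ and z_i ∈ ℝ^d, and fix γ ∈ ℝ^d. Define θ : ℝ^d → ℝ by θ(λ) = N^{-1} [ Σ_{i=1}^N δ_i f(q_i λᵀ z_i) y_i + ( Σ_{i=1}^N z_i − Σ_{i=1}^N δ_i f(q_i λᵀ z_i) z_i )ᵀ γ ]. Suppose λ̂ ∈ ℝ^d satisfies q_i λ̂ᵀ z_i ∈ I for all i with δ_i = 1, set ω̂_i = f(q_i λ̂ᵀ z_i), and suppose γ solves the weighted normal equations Σ_{i=1}^N δ_i q_i ( g′(ω̂_i) )^{-1} ( y_i − z_iᵀ γ ) z_i = 0. Then θ is differentiable at λ̂ and its gradient there is zero: ∇θ(λ̂)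 = 0. -/
open Matrix Finset Filter Topology

/-!
Writing the weights as `wᵢ(λ)`, the estimator equals
`∑ wᵢ(λ) (yᵢ - zᵢ ⬝ᵥ γ) + (∑ zᵢ) ⬝ᵥ γ`, so its derivative in the direction `v` is
`∑ wᵢ'(λ) (yᵢ - zᵢ ⬝ᵥ γ)`. For `wᵢ(λ) = δᵢ f(qᵢ λ ⬝ᵥ zᵢ)` the chain rule gives
`wᵢ'(λ) v = δᵢ qᵢ f'(νᵢ) (v ⬝ᵥ zᵢ)`, and `f'(νᵢ) = 1 / g'(f(νᵢ))` because `g` is a left inverse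
of `f` near `νᵢ`. The directional derivative is therefore `v` dotted with the left-hand side
of the normal equations, which vanishes.
-/

section DotProduct

variable {n : Type*} [Fintype n]

noncomputable def dotProductCLM (v : n → ℝ) : (n → ℝ) →L[ℝ] ℝ :=
  LinearMap.toContinuousLinearMap ((dotProductBilin ℝ ℝ).flip v)

@[simp]
lemma dotProductCLM_apply (v u : n → ℝ) : dotProductCLM v u = u ⬝ᵥ v := rfl

lemma HasDerivAt.hasFDerivAt_comp_mul_dotProduct {f : ℝ → ℝ} {f' c : ℝ} {v lam : n → ℝ}
    (hf : HasDerivAt f f' (c * (lam ⬝ᵥ v))) :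
    HasFDerivAt (fun u => f (c * (u ⬝ᵥ v))) ((f' * c) • dotProductCLM v) lam := by
  have hlin : HasFDerivAt (fun u => c * (u ⬝ᵥ v)) (c • dotProductCLM v) lam :=
    (dotProductCLM v).hasFDerivAt.const_mul c
  rw [mul_smul]
  exact hf.comp_hasFDerivAt lam hlin

variable {ι : Type*} [Fintype ι]

lemma sum_mul_add_sub_sum_smul_dotProduct (w y : ι → ℝ) (z : ι → n → ℝ) (γ : n → ℝ) :
    ∑ i, w i * y i + (∑ i, z i - ∑ i, w i • z i) ⬝ᵥ γ
      = ∑ i, w i * (y i - z i ⬝ᵥ γ) + (∑ i, z i) ⬝ᵥ γ := by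
  simp only [sub_dotProduct, sum_dotProduct, smul_dotProduct, smul_eq_mul, mul_sub,
    sum_sub_distrib]
  ring

theorem hasFDerivAt_augmented_eq_zero {w : ι → (n → ℝ) → ℝ} {c y : ι → ℝ} {z : ι → n → ℝ}
    {γ lam : n → ℝ} (hw : ∀ i, HasFDerivAt (w i) (c i • dotProductCLM (z i)) lam)
    (hnormal : ∑ i, (c i * (y i - z i ⬝ᵥ γ)) • z i = 0) :
    HasFDerivAt (fun u => ∑ i, w i u * y i + (∑ i, z i - ∑ i, w i u • z i) ⬝ᵥ γ)
      (0 : (n → ℝ) →L[ℝ] ℝ) lam := by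
  simp only [sum_mul_add_sub_sum_smul_dotProduct]
  have hsum := (HasFDerivAt.fun_sum (u := univ) fun i _ =>
    (hw i).mul_const (y i - z i ⬝ᵥ γ)).add_const ((∑ i, z i) ⬝ᵥ γ)
  have hderiv : ∑ i, (y i - z i ⬝ᵥ γ) • c i • dotProductCLM (z i) = 0 := by
    ext v
    have hdir : v ⬝ᵥ ∑ i, (c i * (y i - z i ⬝ᵥ γ)) • z i = 0 := by
      rw [hnormal, dotProduct_zero]
    simp only [dotProduct_sum, dotProduct_smul, smul_eq_mul] at hdir
    simp only [_root_.sum_apply, _root_.smul_apply, dotProductCLM_apply,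
      smul_eq_mul, _root_.zero_apply, ← hdir]
    exact sum_congr rfl fun i _ => by ring
  rwa [hderiv] at hsum

end DotProduct

lemma HasDerivAt.mul_eq_one_of_eventually_leftInverse {f g : ℝ → ℝ} {f' g' x : ℝ}
    (hf : HasDerivAt f f' x) (hg : HasDerivAt g g' (f x)) (hinv : ∀ᶠ t in 𝓝 x, g (f t) = t) :
    g' * f' = 1 :=
  ((hg.comp x hf).congr_of_eventuallyEq (hinv.mono fun _ h => h.symm)).unique (hasDerivAt_id x)

theorem stmt_11_general (N d : ℕ) (I : Set ℝ) (hIopen : IsOpen I)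
    (f f' g g' : ℝ → ℝ)
    (hf : ∀ ν ∈ I, HasDerivAt f (f' ν) ν)
    (hg : ∀ ν ∈ I, HasDerivAt g (g' (f ν)) (f ν))
    (hinv : ∀ ν ∈ I, g (f ν) = ν)
    (δ q y : Fin N → ℝ) (hδ : ∀ i, δ i = 0 ∨ δ i = 1)
    (z : Fin N → Fin d → ℝ) (γ : Fin d → ℝ)
    (θ : (Fin d → ℝ) → ℝ)
    (hθ : ∀ lam : Fin d → ℝ, θ lam = (N : ℝ)⁻¹ *
      ((∑ i, δ i * f (q i * (lam ⬝ᵥ z i)) * y i) +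
       ((∑ i, z i) - ∑ i, (δ i * f (q i * (lam ⬝ᵥ z i))) • z i) ⬝ᵥ γ))
    (lamhat : Fin d → ℝ)
    (hmem : ∀ i, δ i = 1 → q i * (lamhat ⬝ᵥ z i) ∈ I)
    (ωhat : Fin N → ℝ) (hωhat : ∀ i, ωhat i = f (q i * (lamhat ⬝ᵥ z i)))
    (hnormal : ∑ i, (δ i * q i * (g' (ωhat i))⁻¹ * (y i - z i ⬝ᵥ γ)) • z i
      = (0 : Fin d → ℝ)) :
    HasFDerivAt θ (0 : (Fin d → ℝ) →L[ℝ] ℝ) lamhat := by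
  have hweight : ∀ i, HasFDerivAt (fun lam => δ i * f (q i * (lam ⬝ᵥ z i)))
      ((δ i * q i * (g' (ωhat i))⁻¹) • dotProductCLM (z i)) lamhat := by
    intro i
    rcases hδ i with h0 | h1
    · simpa [h0] using hasFDerivAt_const (0 : ℝ) lamhat
    · have hν := hmem i h1
      have hf'_eq : f' (q i * (lamhat ⬝ᵥ z i)) = (g' (ωhat i))⁻¹ := by
        rw [hωhat]
        refine eq_inv_of_mul_eq_one_left ?_
        rw [mul_comm]
        exact (hf _ hν).mul_eq_one_of_eventually_leftInverse (hg _ hν)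
          (eventually_of_mem (hIopen.mem_nhds hν) hinv)
      simp only [h1, one_mul]
      rw [← hf'_eq, mul_comm (q i)]
      exact (hf _ hν).hasFDerivAt_comp_mul_dotProduct
  rw [funext hθ]
  simpa using (hasFDerivAt_augmented_eq_zero hweight hnormal).const_mul (N : ℝ)⁻¹

/-- Neyman orthogonality of the GEC estimator with respect to the dual
multiplier: if `γ` solves the weighted normal equations, the augmented
GEC functional `θ(λ)` is differentiable at `λ̂` with zero gradient. -/
theorem stmt_11 (N d : ℕ) (I : Set ℝ) (hIopen : IsOpen I) (hIconn : I.OrdConnected)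
    (f f' g g' : ℝ → ℝ)
    (hf : ∀ ν ∈ I, HasDerivAt f (f' ν) ν)
    (hg : ∀ ν ∈ I, HasDerivAt g (g' (f ν)) (f ν))
    (hinv : ∀ ν ∈ I, g (f ν) = ν)
    (hne : ∀ ν ∈ I, g' (f ν) ≠ 0)
    (δ q y : Fin N → ℝ) (hδ : ∀ i, δ i = 0 ∨ δ i = 1) (hq : ∀ i, 0 < q i)
    (z : Fin N → Fin d → ℝ) (γ : Fin d → ℝ)
    (θ : (Fin d → ℝ) → ℝ)
    (hθ : ∀ lam : Fin d → ℝ, θ lam = (N : ℝ)⁻¹ *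
      ((∑ i, δ i * f (q i * (lam ⬝ᵥ z i)) * y i) +
       ((∑ i, z i) - ∑ i, (δ i * f (q i * (lam ⬝ᵥ z i))) • z i) ⬝ᵥ γ))
    (lamhat : Fin d → ℝ)
    (hmem : ∀ i, δ i = 1 → q i * (lamhat ⬝ᵥ z i) ∈ I)
    (ωhat : Fin N → ℝ) (hωhat : ∀ i, ωhat i = f (q i * (lamhat ⬝ᵥ z i)))
    (hnormal : ∑ i, (δ i * q i * (g' (ωhat i))⁻¹ * (y i - z i ⬝ᵥ γ)) • z i
      = (0 : Fin d → ℝ)) :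
    HasFDerivAt θ (0 : (Fin d → ℝ) →L[ℝ] ℝ) lamhat :=
  stmt_11_general N d I hIopen f f' g g' hf hg hinv δ q y hδ z γ θ hθ lamhat hmem ωhat hωhat hnormal
end

section
/- (Population double robustness of the AIPW functional.) Let (Ω, 𝓕, P) be a probability space, X : Ω → ℝ^{p₀} a measurable covariate vector, Y : Ω → ℝ an integrable outcome, and δ : Ω → {0,1} a response indicator satisfying missing at random (MAR): δ and Y are conditionally independent given σ(X). Let π* : ℝ^{p₀} → [c, 1] be measurable with constant c > 0 and m* : ℝ^{p₀} → ℝ be measurable, with m*(X) and Y/π*(X) integrable. If either (i) π*(X) = E[δ | σ(X)] almost surely, or (ii) m*(X) = E[Y | σ(X)] almost surely, then E[ m*(X) + (δ/π*(X)) ( Y − m*(X) ) ] = E[Y]. -/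
/-!
Under MAR, conditioning on `σ(X)` gives `E[δ (Y - m) | X] = E[δ | X] (E[Y | X] - m)`, so the mean
of the AIPW functional is `E[m] + E[π⁻¹ E[δ | X] (E[Y | X] - m)]`. If `π = E[δ | X]` the
correction term is `E[Y] - E[m]`; if `m = E[Y | X]` it vanishes and `E[m] = E[Y]`. The product
rule for conditional expectations holds because `δ` and `Y` are independent under the regular
conditional distribution `condExpKernel` for almost every `ω`.
-/

open MeasureTheory ProbabilityTheory

namespace ProbabilityTheory

variable {Ω : Type*} {m' : MeasurableSpace Ω} {mΩ : MeasurableSpace Ω} [StandardBorelSpace Ω]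
  {hm' : m' ≤ mΩ} {μ : Measure Ω} [IsFiniteMeasure μ]

theorem CondIndepFun.ae_indepFun_condExpKernel {β β' : Type*} {mβ : MeasurableSpace β}
    {mβ' : MeasurableSpace β'} [MeasurableSpace.CountableOrCountablyGenerated Ω (β × β')]
    {f : Ω → β} {g : Ω → β'}
    (h : CondIndepFun m' hm' f g μ) (hf : Measurable f) (hg : Measurable g) :
    ∀ᵐ ω ∂μ, f ⟂ᵢ[condExpKernel μ m' ω] g := by
  have hmap := (condIndepFun_iff_map_prod_eq_prod_map_map hf hg).mp h
  filter_upwards [ae_of_ae_trim hm' hmap] with ω hω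
  rw [indepFun_iff_map_prod_eq_prod_map_map hf.aemeasurable hg.aemeasurable]
  simpa [Kernel.map_apply _ (hf.prodMk hg), Kernel.map_apply _ hf, Kernel.map_apply _ hg,
    Kernel.prod_apply] using hω

theorem CondIndepFun.condExp_mul {f g : Ω → ℝ} (h : CondIndepFun m' hm' f g μ)
    (hf : Measurable f) (hg : Measurable g) (hfi : Integrable f μ) (hgi : Integrable g μ)
    (hfgi : Integrable (f * g) μ) :
    μ[f * g | m'] =ᵐ[μ] μ[f | m'] * μ[g | m'] := by
  filter_upwards [condExp_ae_eq_integral_condExpKernel hm' hfgi,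
    condExp_ae_eq_integral_condExpKernel hm' hfi, condExp_ae_eq_integral_condExpKernel hm' hgi,
    h.ae_indepFun_condExpKernel hf hg] with ω hfg hf' hg' hind
  rw [hfg, Pi.mul_apply, hf', hg']
  exact hind.integral_mul_eq_mul_integral hf.aestronglyMeasurable hg.aestronglyMeasurable

theorem CondIndepFun.condExp_mul_sub {f g h : Ω → ℝ} (hfg : CondIndepFun m' hm' f g μ)
    (hf : Measurable f) (hg : Measurable g) {C : ℝ} (hf_bdd : ∀ᵐ ω ∂μ, ‖f ω‖ ≤ C)
    (hgi : Integrable g μ) (hh : StronglyMeasurable[m'] h) (hhi : Integrable h μ) :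
    μ[f * (g - h) | m'] =ᵐ[μ] μ[f | m'] * (μ[g | m'] - h) := by
  have hfi : Integrable f μ := .of_bound hf.aestronglyMeasurable C hf_bdd
  have hfgi : Integrable (f * g) μ := hgi.bdd_mul hf.aestronglyMeasurable hf_bdd
  have hhfi : Integrable (h * f) μ := hhi.mul_bdd hf.aestronglyMeasurable hf_bdd
  rw [show f * (g - h) = f * g - h * f by ring]
  filter_upwards [condExp_sub hfgi hhfi m', hfg.condExp_mul hf hg hfi hgi hfgi,
    condExp_mul_of_stronglyMeasurable_left hh hhfi hfi] with ω hsub hmul hpull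
  simp only [hsub, Pi.sub_apply, hmul, hpull, Pi.mul_apply]
  ring

end ProbabilityTheory

namespace MeasureTheory

theorem integral_mul_condExp_of_bound {Ω : Type*} {m mΩ : MeasurableSpace Ω} {μ : Measure Ω}
    [IsFiniteMeasure μ] (hm : m ≤ mΩ) {f g : Ω → ℝ} (hf : StronglyMeasurable[m] f)
    (hg : Integrable g μ) {C : ℝ} (hf_bdd : ∀ᵐ ω ∂μ, ‖f ω‖ ≤ C) :
    ∫ ω, f ω * μ[g | m] ω ∂μ = ∫ ω, f ω * g ω ∂μ :=
  calc ∫ ω, f ω * μ[g | m] ω ∂μ = ∫ ω, μ[f * g | m] ω ∂μ :=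
        integral_congr_ae (condExp_stronglyMeasurable_mul_of_bound hm hf hg C hf_bdd).symm
    _ = ∫ ω, f ω * g ω ∂μ := integral_condExp hm

end MeasureTheory

section AIPW

variable {Ω : Type*} {m' : MeasurableSpace Ω} {mΩ : MeasurableSpace Ω} [StandardBorelSpace Ω]
  {hm' : m' ≤ mΩ} {μ : Measure Ω} [IsProbabilityMeasure μ] {δ Y π m : Ω → ℝ} {C c : ℝ}

noncomputable def aipw (δ Y π m : Ω → ℝ) (ω : Ω) : ℝ := m ω + δ ω / π ω * (Y ω - m ω)

theorem integral_aipw (hMAR : CondIndepFun m' hm' δ Y μ) (hδ : Measurable δ) (hY : Measurable Y)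
    (hδ_bdd : ∀ᵐ ω ∂μ, ‖δ ω‖ ≤ C) (hYi : Integrable Y μ) (hπ : Measurable[m'] π) (hc : 0 < c)
    (hπc : ∀ᵐ ω ∂μ, c ≤ π ω) (hm : Measurable[m'] m) (hmi : Integrable m μ) :
    ∫ ω, aipw δ Y π m ω ∂μ
      = ∫ ω, m ω ∂μ + ∫ ω, (π ω)⁻¹ * (μ[δ | m'] ω * (μ[Y | m'] ω - m ω)) ∂μ := by
  have hπinv_bdd : ∀ᵐ ω ∂μ, ‖(π ω)⁻¹‖ ≤ c⁻¹ := by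
    filter_upwards [hπc] with ω hω
    rw [norm_inv, Real.norm_of_nonneg (hc.le.trans hω)]
    exact inv_anti₀ hc hω
  have hres : Integrable (δ * (Y - m)) μ := (hYi.sub hmi).bdd_mul hδ.aestronglyMeasurable hδ_bdd
  calc ∫ ω, aipw δ Y π m ω ∂μ = ∫ ω, m ω + (π ω)⁻¹ * (δ * (Y - m)) ω ∂μ := by
        simp only [aipw, Pi.mul_apply, Pi.sub_apply, div_eq_inv_mul, mul_assoc, mul_left_comm]
    _ = ∫ ω, m ω ∂μ + ∫ ω, (π ω)⁻¹ * (δ * (Y - m)) ω ∂μ :=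
        integral_add hmi <| hres.bdd_mul (hπ.inv.mono hm' le_rfl).aestronglyMeasurable hπinv_bdd
    _ = ∫ ω, m ω ∂μ + ∫ ω, (π ω)⁻¹ * (μ[δ | m'] ω * (μ[Y | m'] ω - m ω)) ∂μ := by
        rw [← integral_mul_condExp_of_bound (f := fun ω ↦ (π ω)⁻¹) hm' hπ.inv.stronglyMeasurable
          hres hπinv_bdd]
        congr 1
        refine integral_congr_ae ?_
        filter_upwards [hMAR.condExp_mul_sub hδ hY hδ_bdd hYi hm.stronglyMeasurable hmi] with ω hω
        rw [hω, Pi.mul_apply, Pi.sub_apply]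

theorem integral_aipw_of_propensity_ae_eq (hMAR : CondIndepFun m' hm' δ Y μ) (hδ : Measurable δ)
    (hY : Measurable Y) (hδ_bdd : ∀ᵐ ω ∂μ, ‖δ ω‖ ≤ C) (hYi : Integrable Y μ)
    (hπ : Measurable[m'] π) (hc : 0 < c) (hπc : ∀ᵐ ω ∂μ, c ≤ π ω) (hm : Measurable[m'] m)
    (hmi : Integrable m μ) (hπ_eq : π =ᵐ[μ] μ[δ | m']) :
    ∫ ω, aipw δ Y π m ω ∂μ = ∫ ω, Y ω ∂μ := by
  have hcancel : (fun ω ↦ (π ω)⁻¹ * (μ[δ | m'] ω * (μ[Y | m'] ω - m ω)))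
      =ᵐ[μ] fun ω ↦ μ[Y | m'] ω - m ω := by
    filter_upwards [hπ_eq, hπc] with ω hω hcω
    rw [← hω, ← mul_assoc, inv_mul_cancel₀ (hc.trans_le hcω).ne', one_mul]
  rw [integral_aipw hMAR hδ hY hδ_bdd hYi hπ hc hπc hm hmi, integral_congr_ae hcancel,
    integral_sub integrable_condExp hmi, integral_condExp hm']
  ring

theorem integral_aipw_of_regression_ae_eq (hMAR : CondIndepFun m' hm' δ Y μ) (hδ : Measurable δ)
    (hY : Measurable Y) (hδ_bdd : ∀ᵐ ω ∂μ, ‖δ ω‖ ≤ C) (hYi : Integrable Y μ)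
    (hπ : Measurable[m'] π) (hc : 0 < c) (hπc : ∀ᵐ ω ∂μ, c ≤ π ω) (hm : Measurable[m'] m)
    (hm_eq : m =ᵐ[μ] μ[Y | m']) :
    ∫ ω, aipw δ Y π m ω ∂μ = ∫ ω, Y ω ∂μ := by
  have hvanish : (fun ω ↦ (π ω)⁻¹ * (μ[δ | m'] ω * (μ[Y | m'] ω - m ω))) =ᵐ[μ] fun _ ↦ 0 := by
    filter_upwards [hm_eq] with ω hω
    rw [hω, sub_self, mul_zero, mul_zero]
  rw [integral_aipw hMAR hδ hY hδ_bdd hYi hπ hc hπc hm (integrable_condExp.congr hm_eq.symm),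
    integral_congr_ae hvanish, integral_zero, add_zero, integral_congr_ae hm_eq,
    integral_condExp hm']

end AIPW

theorem stmt_13_general {Ω : Type*} [MeasurableSpace Ω] [StandardBorelSpace Ω]
    (P : Measure Ω) [IsProbabilityMeasure P]
    (p₀ : ℕ) (X : Ω → (Fin p₀ → ℝ)) (hX : Measurable X)
    (Y : Ω → ℝ) (hYmeas : Measurable Y) (hYint : Integrable Y P)
    (δ : Ω → ℝ) (hδmeas : Measurable δ) (hδ01 : ∀ ω, δ ω = 0 ∨ δ ω = 1)
    (hMAR : CondIndepFun (MeasurableSpace.comap X inferInstance) hX.comap_le δ Y P)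
    (c : ℝ) (hc : 0 < c)
    (πstar : (Fin p₀ → ℝ) → ℝ) (hπmeas : Measurable πstar)
    (hπrange : ∀ x, πstar x ∈ Set.Icc c 1)
    (mstar : (Fin p₀ → ℝ) → ℝ) (hmmeas : Measurable mstar)
    (hint1 : Integrable (fun ω => mstar (X ω)) P)
    (hDR : ((fun ω => πstar (X ω))
        =ᵐ[P] P[δ | MeasurableSpace.comap X inferInstance]) ∨
      ((fun ω => mstar (X ω))
        =ᵐ[P] P[Y | MeasurableSpace.comap X inferInstance])) :
    ∫ ω, (mstar (X ω) + (δ ω / πstar (X ω)) * (Y ω - mstar (X ω))) ∂P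
      = ∫ ω, Y ω ∂P := by
  have hδ_bdd : ∀ᵐ ω ∂P, ‖δ ω‖ ≤ 1 :=
    ae_of_all _ fun ω ↦ by rcases hδ01 ω with h | h <;> simp [h]
  have hπc : ∀ᵐ ω ∂P, c ≤ πstar (X ω) := ae_of_all _ fun ω ↦ (hπrange (X ω)).1
  have hπ := hπmeas.comp (comap_measurable X)
  have hm := hmmeas.comp (comap_measurable X)
  change ∫ ω, aipw δ Y (πstar ∘ X) (mstar ∘ X) ω ∂P = _
  rcases hDR with hπ_eq | hm_eq
  · exact integral_aipw_of_propensity_ae_eq hMAR hδmeas hYmeas hδ_bdd hYint hπ hc hπc hm hint1 hπ_eq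
  · exact integral_aipw_of_regression_ae_eq hMAR hδmeas hYmeas hδ_bdd hYint hπ hc hπc hm hm_eq

/-- Population double robustness of the AIPW functional: under MAR, if either
the working propensity `π*` equals `E[δ | σ(X)]` a.s., or the working
regression `m*` equals `E[Y | σ(X)]` a.s., then the AIPW functional has mean
`E[Y]`. -/
theorem stmt_13 {Ω : Type*} [MeasurableSpace Ω] [StandardBorelSpace Ω]
    (P : Measure Ω) [IsProbabilityMeasure P]
    (p₀ : ℕ) (X : Ω → (Fin p₀ → ℝ)) (hX : Measurable X)
    (Y : Ω → ℝ) (hYmeas : Measurable Y) (hYint : Integrable Y P)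
    (δ : Ω → ℝ) (hδmeas : Measurable δ) (hδ01 : ∀ ω, δ ω = 0 ∨ δ ω = 1)
    (hMAR : CondIndepFun (MeasurableSpace.comap X inferInstance) hX.comap_le δ Y P)
    (c : ℝ) (hc : 0 < c)
    (πstar : (Fin p₀ → ℝ) → ℝ) (hπmeas : Measurable πstar)
    (hπrange : ∀ x, πstar x ∈ Set.Icc c 1)
    (mstar : (Fin p₀ → ℝ) → ℝ) (hmmeas : Measurable mstar)
    (hint1 : Integrable (fun ω => mstar (X ω)) P)
    (hint2 : Integrable (fun ω => Y ω / πstar (X ω)) P)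
    (hDR : ((fun ω => πstar (X ω))
        =ᵐ[P] P[δ | MeasurableSpace.comap X inferInstance]) ∨
      ((fun ω => mstar (X ω))
        =ᵐ[P] P[Y | MeasurableSpace.comap X inferInstance])) :
    ∫ ω, (mstar (X ω) + (δ ω / πstar (X ω)) * (Y ω - mstar (X ω))) ∂P
      = ∫ ω, Y ω ∂P :=
  stmt_13_general P p₀ X hX Y hYmeas hYint δ hδmeas hδ01 hMAR c hc πstar hπmeas hπrange mstar hmmeas
    hint1 hDR
end
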